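/- arXiv:0910.2132 — 8 statements merged into one kernel-verified Lean document; each statement's English description precedes it below -/
import Mathlib

section
/- If M is an ord-absolute model (i.e., ω^M = ω, ω ⊆ M, and every element of M that M thinks is an ordinal is really an ordinal), then the ord-collapse map i = ordcol^M, defined by i(x) = x if x is an ordinal and i(x) = {i(t) : t ∈ x ∩ M} otherwise, is an ∈-isomorphism from M onto its image M' = ordcol(M). -/
namespace NepPaper

/-- `x` is a (von Neumann) ordinal. -/
def IsOrd (x : ZFSet) : Prop := x.IsOrdinal

/-- `M` believes that `x` is an ordinal: the Δ₀ formula "x is transitive and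
∈-trichotomous" relativized to `M` (all quantifiers range over `M`). -/
def OrdIn (M x : ZFSet) : Prop :=
  (∀ y ∈ M, y ∈ x → ∀ z ∈ M, z ∈ y → z ∈ x) ∧
  (∀ y ∈ M, ∀ z ∈ M, y ∈ x → z ∈ x → y ∈ z ∨ y = z ∨ z ∈ y)

/-- `M` satisfies the extensionality axiom. -/
def Extensional (M : ZFSet) : Prop :=
  ∀ x ∈ M, ∀ y ∈ M, (∀ z ∈ M, z ∈ x ↔ z ∈ y) → x = y

/-- A (sufficient) fragment of ZFC*, relativized to `M`: extensionality,
empty set, pairing, union and set difference. -/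
def ZFCfrag (M : ZFSet) : Prop :=
  Extensional M ∧
  (∃ e ∈ M, ∀ z ∈ M, z ∉ e) ∧
  (∀ x ∈ M, ∀ y ∈ M, ∃ u ∈ M, ∀ z ∈ M, (z ∈ u ↔ (z = x ∨ z = y))) ∧
  (∀ x ∈ M, ∀ y ∈ M, ∃ u ∈ M, ∀ z ∈ M, (z ∈ u ↔ (z ∈ x ∨ z ∈ y))) ∧
  (∀ x ∈ M, ∀ y ∈ M, ∃ u ∈ M, ∀ z ∈ M, (z ∈ u ↔ (z ∈ x ∧ z ∉ y)))

/-- `M` believes that `y` is the set ω (the least inductive set), relativized to `M`. -/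
def OmegaIn (M y : ZFSet) : Prop :=
  OrdIn M y ∧ (∅ : ZFSet) ∈ y ∧ (∀ z ∈ M, z ∈ y → insert z z ∈ y) ∧
  ∀ w ∈ M, ((∅ : ZFSet) ∈ w ∧ ∀ z ∈ M, z ∈ w → insert z z ∈ w) →
    ∀ z ∈ M, z ∈ y → z ∈ w

/-- `M` is ord-absolute: it is a model (of a sufficient fragment of ZFC),
ω^M = ω, ω ⊆ M, and ON^M ⊆ ON. -/
def OrdAbsolute (M : ZFSet) : Prop :=
  ZFCfrag M ∧ ZFSet.omega ∈ M ∧ OmegaIn M ZFSet.omega ∧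
  (∀ n ∈ ZFSet.omega, n ∈ M) ∧ (∀ x ∈ M, OrdIn M x → IsOrd x)

/-- `M` is ord-transitive: ord-absolute, and every non-ordinal element is a subset. -/
def OrdTransitive (M : ZFSet) : Prop :=
  OrdAbsolute M ∧ ∀ x ∈ M, ¬ IsOrd x → ∀ t ∈ x, t ∈ M

/-- `i` is the ord-collapse of `M`: `i x = x` for ordinals `x`, and
`i x = {i t : t ∈ x ∩ M}` otherwise.  (This recursion on ∈ has a unique solution.) -/
def OrdcolChar (M : ZFSet) (i : ZFSet → ZFSet) : Prop :=
  (∀ x : ZFSet, IsOrd x → i x = x) ∧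
  (∀ x : ZFSet, ¬ IsOrd x → ∀ z : ZFSet, (z ∈ i x ↔ ∃ t ∈ x, t ∈ M ∧ i t = z))

/-- `j` is the transitive (Mostowski) collapse of `M`:
`j x = {j t : t ∈ x ∩ M}` for all `x`. -/
def CollapseChar (M : ZFSet) (j : ZFSet → ZFSet) : Prop :=
  ∀ x z : ZFSet, z ∈ j x ↔ ∃ t ∈ x, t ∈ M ∧ j t = z

/-! The collapse `i` fixes ordinals and sends any other `x` to the set of images of `x ∩ M`.
By induction on rank, `i` reflects `=` and `∈` on `M`. The crux is that `i` never sends a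
non-ordinal `y ∈ M` to an ordinal: if `i y` were an ordinal, reflection below the rank of `y`
would make `y` transitive and trichotomous inside `M`, so `M` would think `y` is an ordinal and
ord-absoluteness would make it one. Then `i x = i y` for non-ordinals reduces to extensionality
of `M`, and `i x ∈ i y` for a non-ordinal `y` means `i x = i t` for some `t ∈ y ∩ M`. -/

section OrdCollapse

variable {M : ZFSet} {i : ZFSet → ZFSet} {x y z : ZFSet}

theorem OrdcolChar.apply_mem_apply (hi : OrdcolChar M i) (hx : x ∈ M) (hxy : x ∈ y) :
    i x ∈ i y := by
  by_cases hy : IsOrd y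
  · have hx' : IsOrd x := ZFSet.IsOrdinal.mem hy hxy
    rwa [hi.1 x hx', hi.1 y hy]
  · exact (hi.2 y hy (i x)).2 ⟨x, hxy, hx, rfl⟩

def ReflectsBelow (M : ZFSet) (i : ZFSet → ZFSet) (o : Ordinal) : Prop :=
  ∀ x ∈ M, ∀ y ∈ M, x.rank < o → y.rank < o → (i x = i y → x = y) ∧ (i x ∈ i y → x ∈ y)

theorem ReflectsBelow.mono {o o' : Ordinal} (h : ReflectsBelow M i o') (ho : o ≤ o') :
    ReflectsBelow M i o :=
  fun x hx y hy hxo hyo => h x hx y hy (hxo.trans_le ho) (hyo.trans_le ho)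

theorem OrdcolChar.ordIn_of_isOrd_apply (hi : OrdcolChar M i) (href : ReflectsBelow M i y.rank)
    (hy : ¬ IsOrd y) (hiy : IsOrd (i y)) : OrdIn M y := by
  constructor
  · intro a ha hay b hb hba
    obtain ⟨t, hty, htM, hit⟩ :=
      (hi.2 y hy (i b)).1 (hiy.mem_trans (hi.apply_mem_apply hb hba) (hi.apply_mem_apply ha hay))
    have htb : t = b := (href t htM b hb (ZFSet.rank_lt_of_mem hty)
      ((ZFSet.rank_lt_of_mem hba).trans (ZFSet.rank_lt_of_mem hay))).1 hit
    rwa [← htb]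
  · intro a ha b hb hay hby
    have hra := ZFSet.rank_lt_of_mem hay
    have hrb := ZFSet.rank_lt_of_mem hby
    have hia := hiy.mem (hi.apply_mem_apply ha hay)
    rcases hia.mem_trichotomous (hiy.mem (hi.apply_mem_apply hb hby)) with h | h | h
    · exact .inl ((href a ha b hb hra hrb).2 h)
    · exact .inr (.inl ((href a ha b hb hra hrb).1 h))
    · exact .inr (.inr ((href b hb a ha hrb hra).2 h))

theorem OrdcolChar.isOrd_of_isOrd_apply (hi : OrdcolChar M i)
    (habs : ∀ x ∈ M, OrdIn M x → IsOrd x) (hy : y ∈ M) (href : ReflectsBelow M i y.rank)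
    (hiy : IsOrd (i y)) : IsOrd y := by
  by_contra hy'
  exact hy' (habs y hy (hi.ordIn_of_isOrd_apply href hy' hiy))

theorem OrdcolChar.mem_of_apply_eq (hi : OrdcolChar M i)
    (href : ReflectsBelow M i (max x.rank y.rank)) (hy : ¬ IsOrd y) (h : i x = i y)
    (hz : z ∈ M) (hzx : z ∈ x) : z ∈ y := by
  obtain ⟨t, hty, htM, hit⟩ := (hi.2 y hy (i z)).1 (h ▸ hi.apply_mem_apply hz hzx)
  have htz : t = z := (href t htM z hz
    ((ZFSet.rank_lt_of_mem hty).trans_le (le_max_right _ _))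
    ((ZFSet.rank_lt_of_mem hzx).trans_le (le_max_left _ _))).1 hit
  rwa [← htz]

theorem OrdcolChar.eq_of_apply_eq (hi : OrdcolChar M i) (hext : Extensional M)
    (habs : ∀ x ∈ M, OrdIn M x → IsOrd x) (hx : x ∈ M) (hy : y ∈ M)
    (href : ReflectsBelow M i (max x.rank y.rank)) (h : i x = i y) : x = y := by
  by_cases hx' : IsOrd x
  · have hy' : IsOrd y := hi.isOrd_of_isOrd_apply habs hy (href.mono (le_max_right _ _))
      (by rwa [← h, hi.1 x hx'])
    rwa [hi.1 x hx', hi.1 y hy'] at h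
  by_cases hy' : IsOrd y
  · exact absurd (hi.isOrd_of_isOrd_apply habs hx (href.mono (le_max_left _ _))
      (by rwa [h, hi.1 y hy'])) hx'
  refine hext x hx y hy fun z hz => ⟨hi.mem_of_apply_eq href hy' h hz, ?_⟩
  rw [max_comm] at href
  exact hi.mem_of_apply_eq href hx' h.symm hz

theorem OrdcolChar.mem_of_apply_mem_apply (hi : OrdcolChar M i) (hext : Extensional M)
    (habs : ∀ x ∈ M, OrdIn M x → IsOrd x) (hx : x ∈ M)
    (href : ReflectsBelow M i (max x.rank y.rank)) (h : i x ∈ i y) : x ∈ y := by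
  by_cases hy' : IsOrd y
  · rw [hi.1 y hy'] at h
    have hx' : IsOrd x :=
      hi.isOrd_of_isOrd_apply habs hx (href.mono (le_max_left _ _)) (hy'.mem h)
    rwa [hi.1 x hx'] at h
  · obtain ⟨t, hty, htM, hit⟩ := (hi.2 y hy' (i x)).1 h
    have hrt : max t.rank x.rank ≤ max x.rank y.rank :=
      max_le ((ZFSet.rank_lt_of_mem hty).le.trans (le_max_right _ _)) (le_max_left _ _)
    rwa [← hi.eq_of_apply_eq hext habs htM hx (href.mono hrt) hit]

theorem OrdcolChar.reflectsBelow (hi : OrdcolChar M i) (hext : Extensional M)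
    (habs : ∀ x ∈ M, OrdIn M x → IsOrd x) (o : Ordinal) : ReflectsBelow M i o := by
  induction o using WellFoundedLT.induction with
  | _ o IH =>
    intro x hx y hy hxo hyo
    have href := IH _ (max_lt hxo hyo)
    exact ⟨hi.eq_of_apply_eq hext habs hx hy href, hi.mem_of_apply_mem_apply hext habs hx href⟩

end OrdCollapse

/-- If `M` is ord-absolute then the ord-collapse `i = ordcol^M`
is an ∈-isomorphism from `M` onto its image `ordcol(M)`. -/
theorem ordcol_is_mem_isomorphism (M : ZFSet) (hM : OrdAbsolute M)
    (i : ZFSet → ZFSet) (hi : OrdcolChar M i) :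
    Set.InjOn i M.toSet ∧ ∀ x ∈ M, ∀ y ∈ M, (x ∈ y ↔ i x ∈ i y) := by
  obtain ⟨⟨hext, -⟩, -, -, -, habs⟩ := hM
  have href := hi.reflectsBelow hext habs
  exact ⟨fun x hx y hy h => hi.eq_of_apply_eq hext habs hx hy (href _) h,
    fun x hx y _ => ⟨hi.apply_mem_apply hx, hi.mem_of_apply_mem_apply hext habs hx (href _)⟩⟩

end NepPaper
end

section
/- If M is an ord-absolute model and i = ordcol^M is its ord-collapse, then for every x ∈ M, i(x) is an ordinal if and only if x is an ordinal; in particular M ∩ ON = ordcol(M) ∩ ON. -/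
namespace NepPaper

/-!
An ∈-induction: if `i x` is an ordinal, the induction hypothesis makes every `t ∈ x ∩ M`
an ordinal with `i t = t`, so `x ∩ M = i x`. Then `M` sees `x` as transitive and
∈-trichotomous, because `i x` is, and ord-absoluteness turns this into `x ∈ ON`.
-/

theorem ordIn_of_forall_mem_iff {M x a : ZFSet} (ha : IsOrd a)
    (h : ∀ z ∈ M, z ∈ x ↔ z ∈ a) : OrdIn M x := by
  refine ⟨fun y hyM hyx z hzM hzy => ?_, fun y hyM z hzM hyx hzx => ?_⟩
  · exact (h z hzM).2 (ha.mem_trans hzy ((h y hyM).1 hyx))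
  · exact (ha.mem ((h y hyM).1 hyx)).mem_trichotomous (ha.mem ((h z hzM).1 hzx))

namespace OrdcolChar

variable {M : ZFSet} {i : ZFSet → ZFSet}

theorem isOrd_of_isOrd_apply_s1 (hi : OrdcolChar M i) (hON : ∀ x ∈ M, OrdIn M x → IsOrd x)
    {x : ZFSet} (hxM : x ∈ M) (hix : IsOrd (i x)) : IsOrd x := by
  induction x using ZFSet.inductionOn with
  | _ x IH =>
    by_contra hx
    have apply_eq_self : ∀ t ∈ x, t ∈ M → i t ∈ i x → i t = t := fun t htx htM hit =>
      hi.1 t (IH t htx htM (hix.mem hit))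
    have mem_iff : ∀ z ∈ M, z ∈ x ↔ z ∈ i x := by
      intro z hzM
      constructor
      · intro hzx
        have hiz : i z ∈ i x := (hi.2 x hx (i z)).2 ⟨z, hzx, hzM, rfl⟩
        rwa [apply_eq_self z hzx hzM hiz] at hiz
      · intro hz
        obtain ⟨t, htx, htM, rfl⟩ := (hi.2 x hx z).1 hz
        rwa [apply_eq_self t htx htM hz]
    exact hx (hON x hxM (ordIn_of_forall_mem_iff hix mem_iff))

theorem isOrd_apply_iff (hi : OrdcolChar M i) (hON : ∀ x ∈ M, OrdIn M x → IsOrd x)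
    {x : ZFSet} (hxM : x ∈ M) : IsOrd (i x) ↔ IsOrd x :=
  ⟨hi.isOrd_of_isOrd_apply_s1 hON hxM, fun hx => (hi.1 x hx).symm ▸ hx⟩

end OrdcolChar

/-- For ord-absolute `M`, the ord-collapse `i` satisfies
`i x ∈ ON ↔ x ∈ ON`; in particular `M ∩ ON = ordcol(M) ∩ ON`. -/
theorem ordcol_ordinal_iff (M : ZFSet) (hM : OrdAbsolute M)
    (i : ZFSet → ZFSet) (hi : OrdcolChar M i) :
    (∀ x ∈ M, (IsOrd (i x) ↔ IsOrd x)) ∧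
    {z : ZFSet | z ∈ M ∧ IsOrd z} = {z : ZFSet | (∃ x ∈ M, i x = z) ∧ IsOrd z} := by
  have hON := hM.2.2.2.2
  refine ⟨fun x hxM => hi.isOrd_apply_iff hON hxM, Set.ext fun z => ⟨?_, ?_⟩⟩
  · rintro ⟨hzM, hz⟩
    exact ⟨⟨z, hzM, hi.1 z hz⟩, hz⟩
  · rintro ⟨⟨x, hxM, rfl⟩, hix⟩
    have hx : IsOrd x := hi.isOrd_of_isOrd_apply_s1 hON hxM hix
    exact ⟨by rwa [hi.1 x hx], hix⟩

end NepPaper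
end

section
/- The operations 'uncoll' and 'labeledcoll' give a bijective correspondence between ord-transitive models and labeled models: if M is ord-transitive then labeledcoll(M) is a labeled model and uncoll(labeledcoll(M)) = M; conversely if (M, f) is a labeled model then uncoll(M, f) is an ord-transitive model and labeledcoll(uncoll(M, f)) = (M, f). -/
/-!
The transitive collapse `j` of an extensional `M`, and the map `i` of `uncoll(M', f)` for a
transitive `M'` with strictly increasing labels, are both ∈-isomorphisms onto their images (for `i`:
if `i x` is an ordinal then so is `x`, and `f` is injective on ordinals). The relativized properties
(the fragment of ZFC, `OrdIn`) transfer along such maps, and in a transitive set `OrdIn` is the true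
notion of ordinal. The two maps are mutually inverse by ∈-induction: `i (j x) = x` because `f` undoes
`j` on ordinals and the non-ordinals of `M` are subsets of `M`, and `j (i x) = x` because the
collapse inverts every ∈-isomorphism out of a transitive set.
-/

namespace NepPaper

/-- A labeled model: a transitive countable model `M` (of a sufficient fragment
of ZFC) together with a strictly monotonic `f : M ∩ ON → ON` with `f α = α`
for `α ≤ ω`. -/
def IsLabeledModel (M : ZFSet) (f : ZFSet → ZFSet) : Prop :=
  M.IsTransitive ∧ M.toSet.Countable ∧ ZFCfrag M ∧ ZFSet.omega ∈ M ∧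
  (∀ α ∈ M, IsOrd α → IsOrd (f α)) ∧
  (∀ α ∈ M, ∀ β ∈ M, IsOrd α → IsOrd β → α ∈ β → f α ∈ f β) ∧
  (∀ α ∈ M, IsOrd α → (α ∈ ZFSet.omega ∨ α = ZFSet.omega) → f α = α)

/-- `i` is the map of `uncoll(M, f)`: `i x = f x` for ordinals, and
`i x = {i y : y ∈ x}` otherwise. -/
def UncollChar (f i : ZFSet → ZFSet) : Prop :=
  (∀ x : ZFSet, IsOrd x → i x = f x) ∧
  (∀ x : ZFSet, ¬ IsOrd x → ∀ z : ZFSet, (z ∈ i x ↔ ∃ y ∈ x, i y = z))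

/-- A countable ord-transitive model. -/
def OrdTransitiveCtbl (M : ZFSet) : Prop := OrdTransitive M ∧ M.toSet.Countable

open ZFSet

theorem omega_induction {p : ZFSet → Prop} (zero : p ∅)
    (succ : ∀ n ∈ omega, p n → p (insert n n)) : ∀ n ∈ omega, p n := by
  have hmem (k : ℕ) : mk (PSet.ofNat k) ∈ omega := mk_mem_iff.mpr ⟨⟨k⟩, PSet.Equiv.refl _⟩
  have hp (k : ℕ) : p (mk (PSet.ofNat k)) := by
    induction k with
    | zero => exact zero
    | succ k ih => exact succ _ (hmem k) ih
  rintro ⟨x⟩ hn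
  obtain ⟨⟨k⟩, hk⟩ := mk_mem_iff.mp hn
  change p (mk x)
  rw [sound hk]
  exact hp k

theorem isOrdinal_omega : IsOrdinal omega := by
  refine isOrdinal_iff_forall_mem_isOrdinal.mpr
    ⟨?_, omega_induction isOrdinal_empty fun _ _ => isOrdinal_succ⟩
  refine omega_induction (fun z hz => (notMem_empty z hz).elim) fun n hn ih z hz => ?_
  rcases mem_insert_iff.mp hz with rfl | hz
  exacts [hn, ih hz]

theorem ordIn_of_isOrd (M : ZFSet) {x : ZFSet} (hx : IsOrd x) : OrdIn M x :=
  ⟨fun _ _ hy _ _ hz => hx.mem_trans hz hy,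
    fun _ _ _ _ hy hz => IsOrdinal.mem_trichotomous (hx.mem hy) (hx.mem hz)⟩

theorem isOrd_of_ordIn {M x : ZFSet} (hM : M.IsTransitive) (hxM : x ∈ M) (hx : OrdIn M x) :
    IsOrd x := by
  have hsub : x ⊆ M := hM x hxM
  have htr : x.IsTransitive := fun y hy z hz =>
    hx.1 y (hsub hy) hy z (hM y (hsub hy) hz) hz
  refine ⟨htr, fun {y z w} hyz hzw hwx => ?_⟩
  have hzx := htr w hwx hzw
  have hyx := htr z hzx hyz
  rcases hx.2 y (hsub hyx) w (hsub hwx) hyx hwx with h | rfl | h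
  · exact h
  · exact (mem_asymm hyz hzw).elim
  · exact (mem_wf.asymmetric₃ _ _ _ hyz hzw h).elim

theorem omegaIn_omega {U : ZFSet} (hU : ∀ n ∈ omega, n ∈ U) : OmegaIn U omega :=
  ⟨ordIn_of_isOrd U isOrdinal_omega, omega_zero, fun _ _ => omega_succ,
    fun w _ ⟨hw0, hws⟩ z _ =>
      omega_induction (p := (· ∈ w)) hw0 (fun n hn => hws n (hU n hn)) z⟩

def OrdStrictMonoOn (M : ZFSet) (f : ZFSet → ZFSet) : Prop :=
  ∀ α ∈ M, ∀ β ∈ M, IsOrd α → IsOrd β → α ∈ β → f α ∈ f β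

namespace OrdStrictMonoOn

variable {M : ZFSet} {f : ZFSet → ZFSet} {α β : ZFSet}

theorem apply_mem_apply_iff (hf : OrdStrictMonoOn M f) (hα : α ∈ M) (hβ : β ∈ M)
    (hαo : IsOrd α) (hβo : IsOrd β) : f α ∈ f β ↔ α ∈ β := by
  refine ⟨fun h => ?_, hf α hα β hβ hαo hβo⟩
  rcases IsOrdinal.mem_trichotomous hαo hβo with hαβ | rfl | hβα
  · exact hαβ
  · exact (mem_irrefl _ h).elim
  · exact (mem_asymm h (hf β hβ α hα hβo hαo hβα)).elim

theorem injOn (hf : OrdStrictMonoOn M f) (hα : α ∈ M) (hβ : β ∈ M)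
    (hαo : IsOrd α) (hβo : IsOrd β) (h : f α = f β) : α = β := by
  rcases IsOrdinal.mem_trichotomous hαo hβo with hαβ | hαβ | hβα
  · exact (mem_irrefl (f β) (h ▸ hf α hα β hβ hαo hβo hαβ)).elim
  · exact hαβ
  · exact (mem_irrefl (f α) (h ▸ hf β hβ α hα hβo hαo hβα)).elim

end OrdStrictMonoOn

structure IsMemIso (M N : ZFSet) (e : ZFSet → ZFSet) : Prop where
  mem_iff_exists : ∀ z, z ∈ N ↔ ∃ x ∈ M, e x = z
  injOn : ∀ {x y}, x ∈ M → y ∈ M → e x = e y → x = y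
  apply_mem_apply_iff : ∀ {x y}, x ∈ M → y ∈ M → (e y ∈ e x ↔ y ∈ x)

namespace IsMemIso

variable {M N x y : ZFSet} {e : ZFSet → ZFSet}

theorem apply_mem (h : IsMemIso M N e) (hx : x ∈ M) : e x ∈ N :=
  (h.mem_iff_exists _).mpr ⟨x, hx, rfl⟩

theorem apply_eq_apply_iff (h : IsMemIso M N e) (hx : x ∈ M) (hy : y ∈ M) : e x = e y ↔ x = y :=
  ⟨h.injOn hx hy, congrArg e⟩

theorem forall_mem_iff (h : IsMemIso M N e) {p : ZFSet → Prop} :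
    (∀ z ∈ N, p z) ↔ ∀ x ∈ M, p (e x) := by
  refine ⟨fun hp x hx => hp _ (h.apply_mem hx), fun hp z hz => ?_⟩
  obtain ⟨x, hx, rfl⟩ := (h.mem_iff_exists z).mp hz
  exact hp x hx

theorem countable (h : IsMemIso M N e) (hM : M.toSet.Countable) : N.toSet.Countable := by
  have hN : N.toSet = e '' M.toSet := Set.ext h.mem_iff_exists
  exact hN ▸ hM.image e

theorem extensional (h : IsMemIso M N e) (hM : Extensional M) : Extensional N := by
  refine h.forall_mem_iff.mpr fun x hx => h.forall_mem_iff.mpr fun y hy hxy => ?_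
  refine congrArg e (hM x hx y hy fun z hz => ?_)
  rw [← h.apply_mem_apply_iff hx hz, ← h.apply_mem_apply_iff hy hz]
  exact hxy _ (h.apply_mem hz)

theorem zfcfrag (h : IsMemIso M N e) (hM : ZFCfrag M) : ZFCfrag N := by
  obtain ⟨hext, ⟨o, ho, hempty⟩, hpair, hunion, hdiff⟩ := hM
  refine ⟨h.extensional hext, ⟨e o, h.apply_mem ho, h.forall_mem_iff.mpr fun z hz hzo => ?_⟩,
    ?_, ?_, ?_⟩
  · exact hempty z hz ((h.apply_mem_apply_iff ho hz).mp hzo)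
  all_goals
    refine h.forall_mem_iff.mpr fun x hx => h.forall_mem_iff.mpr fun y hy => ?_
  · obtain ⟨u, hu, hpair⟩ := hpair x hx y hy
    refine ⟨e u, h.apply_mem hu, h.forall_mem_iff.mpr fun z hz => ?_⟩
    rw [h.apply_mem_apply_iff hu hz, h.apply_eq_apply_iff hz hx, h.apply_eq_apply_iff hz hy]
    exact hpair z hz
  · obtain ⟨u, hu, hunion⟩ := hunion x hx y hy
    refine ⟨e u, h.apply_mem hu, h.forall_mem_iff.mpr fun z hz => ?_⟩
    rw [h.apply_mem_apply_iff hu hz, h.apply_mem_apply_iff hx hz, h.apply_mem_apply_iff hy hz]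
    exact hunion z hz
  · obtain ⟨u, hu, hdiff⟩ := hdiff x hx y hy
    refine ⟨e u, h.apply_mem hu, h.forall_mem_iff.mpr fun z hz => ?_⟩
    rw [h.apply_mem_apply_iff hu hz, h.apply_mem_apply_iff hx hz, h.apply_mem_apply_iff hy hz]
    exact hdiff z hz

theorem ordIn_apply_iff (h : IsMemIso M N e) (hx : x ∈ M) : OrdIn N (e x) ↔ OrdIn M x := by
  unfold OrdIn
  simp +contextual only [h.forall_mem_iff, h.apply_mem_apply_iff, h.apply_eq_apply_iff, hx]

theorem collapse_apply_eq (h : IsMemIso M N e) (hM : M.IsTransitive) {j : ZFSet → ZFSet}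
    (hj : CollapseChar N j) : ∀ x ∈ M, j (e x) = x := by
  intro x
  induction x using ZFSet.inductionOn with
  | _ x ih =>
  intro hx
  ext z
  rw [hj]
  constructor
  · rintro ⟨t, ht, htN, rfl⟩
    obtain ⟨y, hy, rfl⟩ := (h.mem_iff_exists t).mp htN
    have hyx := (h.apply_mem_apply_iff hx hy).mp ht
    rwa [ih y hyx hy]
  · intro hz
    have hzM := hM x hx hz
    exact ⟨e z, (h.apply_mem_apply_iff hx hzM).mpr hz, h.apply_mem hzM, ih z hz hzM⟩

end IsMemIso

namespace CollapseChar

variable {M M' T x y : ZFSet} {j : ZFSet → ZFSet}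

theorem apply_mem_apply (hj : CollapseChar M j) (hyx : y ∈ x) (hy : y ∈ M) : j y ∈ j x :=
  (hj x _).mpr ⟨y, hyx, hy, rfl⟩

theorem injOn (hj : CollapseChar M j) (hM : Extensional M) :
    ∀ x ∈ M, ∀ y ∈ M, j x = j y → x = y := by
  intro x
  induction x using ZFSet.inductionOn with
  | _ x ih =>
  intro hx y hy hxy
  refine hM x hx y hy fun z hz => ⟨fun hzx => ?_, fun hzy => ?_⟩
  · obtain ⟨t, hty, ht, hjt⟩ := (hj y _).mp (hxy ▸ hj.apply_mem_apply hzx hz)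
    rwa [ih z hzx hz t ht hjt.symm]
  · obtain ⟨t, htx, ht, hjt⟩ := (hj x _).mp (hxy ▸ hj.apply_mem_apply hzy hz)
    rwa [← ih t htx ht z hz hjt]

theorem isMemIso (hj : CollapseChar M j) (hM : Extensional M)
    (hM' : ∀ z, z ∈ M' ↔ ∃ x ∈ M, j x = z) : IsMemIso M M' j where
  mem_iff_exists := hM'
  injOn hx hy := hj.injOn hM _ hx _ hy
  apply_mem_apply_iff {x y} _ hy := by
    refine ⟨fun h => ?_, fun h => hj.apply_mem_apply h hy⟩
    obtain ⟨t, htx, ht, hjt⟩ := (hj x _).mp h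
    rwa [hj.injOn hM y hy t ht hjt.symm]

theorem isTransitive_image (hj : CollapseChar M j) (hM' : ∀ z, z ∈ M' ↔ ∃ x ∈ M, j x = z) :
    M'.IsTransitive := by
  intro z hz y hy
  obtain ⟨x, -, rfl⟩ := (hM' z).mp hz
  obtain ⟨t, -, ht, rfl⟩ := (hj x y).mp hy
  exact (hM' _).mpr ⟨t, ht, rfl⟩

theorem isOrd_apply (hj : CollapseChar M j) (hx : IsOrd x) : IsOrd (j x) := by
  induction x using ZFSet.inductionOn with
  | _ x ih =>
  refine isOrdinal_iff_forall_mem_isOrdinal.mpr ⟨fun y hy z hz => ?_, fun y hy => ?_⟩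
  · obtain ⟨t, htx, -, rfl⟩ := (hj x y).mp hy
    obtain ⟨s, hst, hs, rfl⟩ := (hj t z).mp hz
    exact hj.apply_mem_apply (hx.mem_trans hst htx) hs
  · obtain ⟨t, htx, -, rfl⟩ := (hj x y).mp hy
    exact ih t htx (hx.mem htx)

theorem apply_eq_self_of_subset (hj : CollapseChar M j) (hT : T.IsTransitive) (hTM : T ⊆ M) :
    ∀ x ⊆ T, j x = x := by
  intro x
  induction x using ZFSet.inductionOn with
  | _ x ih =>
  intro hxT
  ext z
  rw [hj]
  constructor
  · rintro ⟨t, htx, -, rfl⟩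
    rwa [ih t htx (hT t (hxT htx))]
  · intro hz
    exact ⟨z, hz, hTM (hxT hz), ih z hz (hT z (hxT hz))⟩

end CollapseChar

namespace UncollChar

variable {M U x y : ZFSet} {f i : ZFSet → ZFSet}

theorem apply_mem_apply (hi : UncollChar f i) (hx : ¬ IsOrd x) (hyx : y ∈ x) : i y ∈ i x :=
  (hi.2 x hx _).mpr ⟨y, hyx, rfl⟩

theorem isOrd_of_isOrd_apply (hi : UncollChar f i) (hM : M.IsTransitive)
    (hf : OrdStrictMonoOn M f) : ∀ x ∈ M, IsOrd (i x) → IsOrd x := by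
  intro x
  induction x using ZFSet.inductionOn with
  | _ x ih =>
  intro hxM hix
  by_contra hx
  have hsub : x ⊆ M := hM x hxM
  have hord : ∀ z ∈ x, IsOrd z := fun z hz =>
    ih z hz (hsub hz) (hix.mem (hi.apply_mem_apply hx hz))
  -- For `s ∈ z ∈ x`, the label `f s` lies in the ordinal `i x`, so it is the label of some `w ∈ x`.
  refine hx (isOrdinal_iff_forall_mem_isOrdinal.mpr ⟨fun z hz s hs => ?_, hord⟩)
  have hzo := hord z hz
  have hso := hzo.mem hs
  have hsM := hM z (hsub hz) hs
  have hfs : f s ∈ i x :=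
    hix.mem_trans (hf s hsM z (hsub hz) hso hzo hs) (hi.1 z hzo ▸ hi.apply_mem_apply hx hz)
  obtain ⟨w, hwx, hiw⟩ := (hi.2 x hx _).mp hfs
  have hwo := hord w hwx
  rwa [← hf.injOn (hsub hwx) hsM hwo hso (hi.1 w hwo ▸ hiw)]

theorem isOrd_apply_iff (hi : UncollChar f i) (hM : M.IsTransitive)
    (hford : ∀ α ∈ M, IsOrd α → IsOrd (f α)) (hf : OrdStrictMonoOn M f) (hx : x ∈ M) :
    IsOrd (i x) ↔ IsOrd x :=
  ⟨hi.isOrd_of_isOrd_apply hM hf x hx, fun h => hi.1 x h ▸ hford x hx h⟩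

theorem injOn (hi : UncollChar f i) (hM : M.IsTransitive)
    (hford : ∀ α ∈ M, IsOrd α → IsOrd (f α)) (hf : OrdStrictMonoOn M f) :
    ∀ x ∈ M, ∀ y ∈ M, i x = i y → x = y := by
  intro x
  induction x using ZFSet.inductionOn with
  | _ x ih =>
  intro hx y hy hxy
  have hord_iff : IsOrd x ↔ IsOrd y := by
    rw [← hi.isOrd_apply_iff hM hford hf hx, ← hi.isOrd_apply_iff hM hford hf hy, hxy]
  by_cases hxo : IsOrd x
  · have hyo := hord_iff.mp hxo
    exact hf.injOn hx hy hxo hyo (by rw [← hi.1 x hxo, ← hi.1 y hyo, hxy])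
  · have hyo := hord_iff.not.mp hxo
    ext z
    constructor
    · intro hz
      obtain ⟨t, hty, hit⟩ := (hi.2 y hyo _).mp (hxy ▸ hi.apply_mem_apply hxo hz)
      rwa [ih z hz (hM x hx hz) t (hM y hy hty) hit.symm]
    · intro hz
      obtain ⟨t, htx, hit⟩ := (hi.2 x hxo _).mp (hxy ▸ hi.apply_mem_apply hyo hz)
      rwa [← ih t htx (hM x hx htx) z (hM y hy hz) hit]

theorem isMemIso (hi : UncollChar f i) (hM : M.IsTransitive)
    (hford : ∀ α ∈ M, IsOrd α → IsOrd (f α)) (hf : OrdStrictMonoOn M f)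
    (hU : ∀ z, z ∈ U ↔ ∃ x ∈ M, i x = z) : IsMemIso M U i where
  mem_iff_exists := hU
  injOn hx hy := hi.injOn hM hford hf _ hx _ hy
  apply_mem_apply_iff {x y} hx hy := by
    by_cases hxo : IsOrd x
    · by_cases hyo : IsOrd y
      · rw [hi.1 x hxo, hi.1 y hyo]
        exact hf.apply_mem_apply_iff hy hx hyo hxo
      · refine iff_of_false (fun h => hyo ?_) (fun h => hyo (hxo.mem h))
        exact (hi.isOrd_apply_iff hM hford hf hy).mp
          (((hi.isOrd_apply_iff hM hford hf hx).mpr hxo).mem h)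
    · rw [hi.2 x hxo]
      refine ⟨fun ⟨t, htx, hit⟩ => ?_, fun h => ⟨y, h, rfl⟩⟩
      rwa [← hi.injOn hM hford hf t (hM x hx htx) y hy hit]

theorem apply_collapse_eq {j : ZFSet → ZFSet} (hi : UncollChar f i) (hj : CollapseChar M j)
    (hsub : ∀ x ∈ M, ¬ IsOrd x → ∀ t ∈ x, t ∈ M) (hjord : ∀ x ∈ M, IsOrd (j x) → IsOrd x)
    (hf : ∀ α ∈ M, IsOrd α → f (j α) = α) : ∀ x ∈ M, i (j x) = x := by
  intro x
  induction x using ZFSet.inductionOn with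
  | _ x ih =>
  intro hx
  by_cases hxo : IsOrd x
  · rw [hi.1 _ (hj.isOrd_apply hxo), hf x hx hxo]
  · ext z
    rw [hi.2 _ (fun h => hxo (hjord x hx h))]
    constructor
    · rintro ⟨y, hy, rfl⟩
      obtain ⟨t, htx, ht, rfl⟩ := (hj x y).mp hy
      rwa [ih t htx ht]
    · intro hz
      have hzM := hsub x hx hxo z hz
      exact ⟨j z, hj.apply_mem_apply hz hzM, ih z hz hzM⟩

end UncollChar

section Labeledcoll

variable {M M' x : ZFSet} {j f : ZFSet → ZFSet}

theorem isOrd_of_isOrd_collapse (hext : Extensional M) (habs : ∀ x ∈ M, OrdIn M x → IsOrd x)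
    (hj : CollapseChar M j) (hM' : ∀ z, z ∈ M' ↔ ∃ x ∈ M, j x = z) (hx : x ∈ M)
    (hjx : IsOrd (j x)) : IsOrd x :=
  habs x hx (((hj.isMemIso hext hM').ordIn_apply_iff hx).mp (ordIn_of_isOrd M' hjx))

theorem isLabeledModel_labeledcoll (hM : OrdTransitiveCtbl M) (hj : CollapseChar M j)
    (hM' : ∀ z, z ∈ M' ↔ ∃ x ∈ M, j x = z) (hf : ∀ α ∈ M, IsOrd α → f (j α) = α) :
    IsLabeledModel M' f := by
  obtain ⟨⟨⟨hfrag, hωM, -, hωsub, habs⟩, -⟩, hctbl⟩ := hM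
  have hiso := hj.isMemIso hfrag.1 hM'
  have hjω : ∀ α ⊆ omega, j α = α :=
    hj.apply_eq_self_of_subset isOrdinal_omega.isTransitive hωsub
  have hord : ∀ α' ∈ M', IsOrd α' → ∃ α ∈ M, IsOrd α ∧ j α = α' := by
    intro α' hα' hα'o
    obtain ⟨α, hα, rfl⟩ := (hM' α').mp hα'
    exact ⟨α, hα, isOrd_of_isOrd_collapse hfrag.1 habs hj hM' hα hα'o, rfl⟩
  refine ⟨hj.isTransitive_image hM', hiso.countable hctbl, hiso.zfcfrag hfrag,
    hjω omega subset_rfl ▸ hiso.apply_mem hωM, ?_, ?_, ?_⟩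
  · intro α' hα' hα'o
    obtain ⟨α, hα, hαo, rfl⟩ := hord α' hα' hα'o
    rwa [hf α hα hαo]
  · intro α' hα' β' hβ' hα'o hβ'o hαβ
    obtain ⟨α, hα, hαo, rfl⟩ := hord α' hα' hα'o
    obtain ⟨β, hβ, hβo, rfl⟩ := hord β' hβ' hβ'o
    rw [hf α hα hαo, hf β hβ hβo]
    exact (hiso.apply_mem_apply_iff hβ hα).mp hαβ
  · intro α' hα' hα'o hle
    obtain ⟨α, hα, hαo, rfl⟩ := hord α' hα' hα'o
    have hsub : j α ⊆ omega := hle.elim isOrdinal_omega.subset_of_mem fun h => h ▸ subset_rfl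
    have hmem : j α ∈ M := hle.elim (hωsub _) fun h => h ▸ hωM
    rw [hf α hα hαo]
    exact (hiso.injOn hmem hα (hjω _ hsub)).symm

theorem uncoll_labeledcoll (hM : OrdTransitive M) (hj : CollapseChar M j)
    (hM' : ∀ z, z ∈ M' ↔ ∃ x ∈ M, j x = z) (hf : ∀ α ∈ M, IsOrd α → f (j α) = α)
    {i : ZFSet → ZFSet} (hi : UncollChar f i) {U : ZFSet}
    (hU : ∀ z, z ∈ U ↔ ∃ x ∈ M', i x = z) : U = M := by
  obtain ⟨⟨⟨hext, -⟩, -, -, -, habs⟩, hsub⟩ := hM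
  have key := hi.apply_collapse_eq hj hsub
    (fun _ hx => isOrd_of_isOrd_collapse hext habs hj hM' hx) hf
  ext z
  rw [hU z]
  constructor
  · rintro ⟨x', hx', rfl⟩
    obtain ⟨x, hx, rfl⟩ := (hM' x').mp hx'
    rwa [key x hx]
  · intro hz
    exact ⟨j z, (hM' _).mpr ⟨z, hz, rfl⟩, key z hz⟩

end Labeledcoll

section Uncoll

variable {M' U : ZFSet} {f i : ZFSet → ZFSet}

theorem ordTransitiveCtbl_uncoll (hL : IsLabeledModel M' f) (hi : UncollChar f i)
    (hU : ∀ z, z ∈ U ↔ ∃ x ∈ M', i x = z) : OrdTransitiveCtbl U := by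
  obtain ⟨htr, hctbl, hfrag, hωM', hford, hf, hfix⟩ := hL
  have hiso := hi.isMemIso htr hford hf hU
  have hiω : ∀ α ∈ M', IsOrd α → (α ∈ omega ∨ α = omega) → i α = α :=
    fun α hα hαo hle => (hi.1 α hαo).trans (hfix α hα hαo hle)
  have hωU : ∀ n ∈ omega, n ∈ U := fun n hn =>
    hiω n (htr _ hωM' hn) (isOrdinal_omega.mem hn) (Or.inl hn) ▸ hiso.apply_mem (htr _ hωM' hn)
  refine ⟨⟨⟨hiso.zfcfrag hfrag, hiω _ hωM' isOrdinal_omega (Or.inr rfl) ▸ hiso.apply_mem hωM',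
    omegaIn_omega hωU, hωU, ?_⟩, ?_⟩, hiso.countable hctbl⟩
  · refine hiso.forall_mem_iff.mpr fun x hx hxo => ?_
    exact (hi.isOrd_apply_iff htr hford hf hx).mpr
      (isOrd_of_ordIn htr hx ((hiso.ordIn_apply_iff hx).mp hxo))
  · refine hiso.forall_mem_iff.mpr fun x hx hxo t ht => ?_
    have hxo' : ¬ IsOrd x := fun h => hxo ((hi.isOrd_apply_iff htr hford hf hx).mpr h)
    obtain ⟨y, hy, rfl⟩ := (hi.2 x hxo' t).mp ht
    exact hiso.apply_mem (htr x hx hy)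

theorem labeledcoll_uncoll (hL : IsLabeledModel M' f) (hi : UncollChar f i)
    (hU : ∀ z, z ∈ U ↔ ∃ x ∈ M', i x = z) {j : ZFSet → ZFSet} (hj : CollapseChar U j) :
    (∀ z, (∃ x ∈ U, j x = z) ↔ z ∈ M') ∧ ∀ x ∈ U, IsOrd x → f (j x) = x := by
  obtain ⟨htr, -, -, -, hford, hf, -⟩ := hL
  have hiso := hi.isMemIso htr hford hf hU
  have key := hiso.collapse_apply_eq htr hj
  refine ⟨fun z => ⟨?_, fun hz => ⟨i z, hiso.apply_mem hz, key z hz⟩⟩,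
    hiso.forall_mem_iff.mpr fun x hx hxo => ?_⟩
  · rintro ⟨a, ha, rfl⟩
    obtain ⟨x, hx, rfl⟩ := (hU a).mp ha
    rwa [key x hx]
  · rw [key x hx, ← hi.1 x ((hi.isOrd_apply_iff htr hford hf hx).mp hxo)]

end Uncoll

/-- `uncoll` and `labeledcoll` give a bijective correspondence
between ord-transitive models and labeled models:
(1) if `M` is ord-transitive, `j` its transitive collapse with image `M'`, and
`f` the inverse of `j` on the ordinals, then `(M', f)` is a labeled model and
`uncoll(M', f) = M`;
(2) if `(M', f)` is a labeled model then `U = uncoll(M', f)` is ord-transitive,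
and `labeledcoll(U) = (M', f)`: the transitive collapse `j` of `U` has image
`M'` and `f` is the inverse of `j` on the ordinals of `U`. -/
theorem uncoll_labeledcoll_correspondence :
    (∀ M : ZFSet, OrdTransitiveCtbl M →
      ∀ j : ZFSet → ZFSet, CollapseChar M j →
      ∀ M' : ZFSet, (∀ z : ZFSet, z ∈ M' ↔ ∃ x ∈ M, j x = z) →
      ∀ f : ZFSet → ZFSet, (∀ α ∈ M, IsOrd α → f (j α) = α) →
        IsLabeledModel M' f ∧
        ∀ i : ZFSet → ZFSet, UncollChar f i →
          ∀ U : ZFSet, (∀ z : ZFSet, z ∈ U ↔ ∃ x ∈ M', i x = z) → U = M) ∧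
    (∀ M' : ZFSet, ∀ f : ZFSet → ZFSet, IsLabeledModel M' f →
      ∀ i : ZFSet → ZFSet, UncollChar f i →
      ∀ U : ZFSet, (∀ z : ZFSet, z ∈ U ↔ ∃ x ∈ M', i x = z) →
        OrdTransitiveCtbl U ∧
        ∀ j : ZFSet → ZFSet, CollapseChar U j →
          (∀ z : ZFSet, (∃ x ∈ U, j x = z) ↔ z ∈ M') ∧
          (∀ x ∈ U, IsOrd x → f (j x) = x)) := by
  exact ⟨fun _ hM _ hj _ hM' _ hf => ⟨isLabeledModel_labeledcoll hM hj hM' hf,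
      fun _ hi _ hU => uncoll_labeledcoll hM.1 hj hM' hf hi hU⟩,
    fun _ _ hL _ hi _ hU => ⟨ordTransitiveCtbl_uncoll hL hi hU,
      fun _ hj => labeledcoll_uncoll hL hi hU hj⟩⟩

end NepPaper
end

section
/- If M is a cf-ω-absolute ord-transitive model and M thinks that x is countable, then x ⊆ M. -/
namespace NepPaper

/-- `M` believes that `x` is countable: `M` contains (the graph of) an
injection of `x` into ω (functions coded by Kuratowski pairs). -/
def CtblIn (M x : ZFSet) : Prop :=
  ∃ f ∈ M, ∀ a ∈ M, a ∈ x → ∃ b ∈ M, b ∈ ZFSet.omega ∧ ZFSet.pair a b ∈ f ∧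
    ∀ a' ∈ M, a' ∈ x → ZFSet.pair a' b ∈ f → a' = a

/-- `M` believes that `α` is a successor ordinal. -/
def SuccIn (M α : ZFSet) : Prop :=
  ∃ β ∈ M, ∀ z ∈ M, (z ∈ α ↔ (z ∈ β ∨ z = β))

/-- `M` is successor-absolute: "α is a successor" and "α = β + 1" are
absolute between `M` and `V`. -/
def SuccAbs (M : ZFSet) : Prop :=
  (∀ α ∈ M, IsOrd α → (SuccIn M α ↔ ∃ β : ZFSet, IsOrd β ∧ α = insert β β)) ∧
  (∀ α ∈ M, ∀ β ∈ M, IsOrd α → IsOrd β →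
    ((∀ z ∈ M, (z ∈ α ↔ (z ∈ β ∨ z = β))) ↔ α = insert β β))

/-- `M` believes that `A` is a countable cofinal subset of `α`. -/
def CtblCofIn (M A α : ZFSet) : Prop :=
  CtblIn M A ∧ (∀ z ∈ M, z ∈ A → z ∈ α) ∧
  (∀ β ∈ M, β ∈ α → ∃ γ ∈ M, γ ∈ A ∧ (β ∈ γ ∨ β = γ))

/-- `A` really is a countable cofinal subset of `α` (in `V`). -/
def CtblCofV (A α : ZFSet) : Prop :=
  A.toSet.Countable ∧ (∀ z ∈ A, z ∈ α) ∧ ∀ β ∈ α, ∃ γ ∈ A, (β ∈ γ ∨ β = γ)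

/-- `M` is cf-ω-absolute: it is successor-absolute, and "cf(α) = ω" as well as
"A is a countable cofinal subset of α" are absolute between `M` and `V`. -/
def CfOmegaAbs (M : ZFSet) : Prop :=
  SuccAbs M ∧
  (∀ α ∈ M, IsOrd α → ((∃ A ∈ M, CtblCofIn M A α) ↔ ∃ A : ZFSet, CtblCofV A α)) ∧
  (∀ α ∈ M, ∀ A ∈ M, IsOrd α → (CtblCofIn M A α ↔ CtblCofV A α))

open ZFSet

theorem _root_.ZFSet.IsOrdinal.empty_mem {α : ZFSet} (hα : α.IsOrdinal) (hne : α.Nonempty) :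
    ∅ ∈ α := by
  obtain ⟨γ, hγ⟩ := hne
  refine (isOrdinal_empty.mem_or_subset hα).resolve_right fun hsub => ?_
  exact notMem_empty γ (hsub hγ)

theorem CtblIn.mono {M x y : ZFSet} (h : CtblIn M x) (hyx : ∀ a ∈ M, a ∈ y → a ∈ x) :
    CtblIn M y := by
  obtain ⟨f, hfM, hf⟩ := h
  refine ⟨f, hfM, fun a haM hay => ?_⟩
  obtain ⟨b, hbM, hbω, hab, hinj⟩ := hf a haM (hyx a haM hay)
  exact ⟨b, hbM, hbω, hab, fun a' ha'M ha'y => hinj a' ha'M (hyx a' ha'M ha'y)⟩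

/-- The witness is `α \ 1`: it misses `0` without being empty, so it is not an ordinal. -/
theorem exists_ctblCofIn_not_isOrd {M α : ZFSet} (hM : OrdAbsolute M) (hαM : α ∈ M)
    (hctbl : CtblIn M α) (hone : (insert ∅ ∅ : ZFSet) ∈ α) :
    ∃ u ∈ M, CtblCofIn M u α ∧ ¬ IsOrd u := by
  have hzeroM : (∅ : ZFSet) ∈ M := hM.2.2.2.1 _ omega_zero
  have honeM : (insert ∅ ∅ : ZFSet) ∈ M := hM.2.2.2.1 _ (omega_succ omega_zero)
  obtain ⟨u, huM, hu⟩ := hM.1.2.2.2.2 α hαM _ honeM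
  have hone_u : (insert ∅ ∅ : ZFSet) ∈ u := (hu _ honeM).2 ⟨hone, mem_irrefl _⟩
  have hzero_u : (∅ : ZFSet) ∉ u := fun h => ((hu _ hzeroM).1 h).2 (mem_insert _ _)
  refine ⟨u, huM, ⟨hctbl.mono fun a haM hau => ((hu a haM).1 hau).1,
    fun z hzM hzu => ((hu z hzM).1 hzu).1, fun β hβM hβα => ?_⟩,
    fun hord => hzero_u (hord.empty_mem ⟨_, hone_u⟩)⟩
  by_cases hβ : β ∈ (insert ∅ ∅ : ZFSet)
  · exact ⟨insert ∅ ∅, honeM, hone_u, Or.inl hβ⟩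
  · exact ⟨β, hβM, (hu β hβM).2 ⟨hβα, hβ⟩, Or.inr rfl⟩

/-- By cf-ω-absoluteness the set `u` of `exists_ctblCofIn_not_isOrd` really is cofinal in `α`, and
`u ⊆ M` because `u` is not an ordinal. So every `β ∈ α` lies below some `γ ∈ u`, an ordinal of `M`
that `M` thinks countable, and `∈`-induction applies. -/
theorem subset_of_isOrd_of_ctblIn {M : ZFSet} (hM : OrdTransitive M) (hcf : CfOmegaAbs M)
    (α : ZFSet) (hα : IsOrd α) (hαM : α ∈ M) (hctbl : CtblIn M α) : ∀ β ∈ α, β ∈ M := by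
  induction α using ZFSet.inductionOn with
  | _ α ih =>
  intro β hβα
  rcases (isOrdinal_succ isOrdinal_empty).mem_or_subset hα with hone | hsub
  · obtain ⟨u, huM, hcof, hu⟩ := exists_ctblCofIn_not_isOrd hM.1 hαM hctbl hone
    obtain ⟨-, huα, hcofV⟩ := (hcf.2.2 α hαM u huM hα).1 hcof
    obtain ⟨γ, hγu, hβγ⟩ := hcofV β hβα
    have hγM : γ ∈ M := hM.2 u huM hu γ hγu
    have hγα : γ ∈ α := huα γ hγu
    rcases hβγ with hβγ | rfl
    · exact ih γ hγα (hα.mem hγα) hγM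
        (hctbl.mono fun a _ haγ => hα.mem_trans haγ hγα) β hβγ
    · exact hγM
  · obtain rfl | h := mem_insert_iff.1 (hsub hβα)
    · exact hM.1.2.2.2.1 _ omega_zero
    · exact absurd h (notMem_empty β)

/-- If `M` is a cf-ω-absolute ord-transitive model and `M` thinks
that `x` is countable, then `x ⊆ M`. -/
theorem subset_of_ctblIn (M : ZFSet) (hM : OrdTransitive M) (hcf : CfOmegaAbs M)
    (x : ZFSet) (hx : x ∈ M) (hctbl : CtblIn M x) : ∀ t ∈ x, t ∈ M := by
  by_cases hord : IsOrd x
  · exact subset_of_isOrd_of_ctblIn hM hcf x hord hx hctbl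
  · exact hM.2 x hx hord

end NepPaper
end

section
/- (Bigness lemma for creatures) If φ is an i-creature with nor(φ) > 1 and F : val(φ) → 2 is any 2-coloring, then there exists an i-creature ψ ≤ φ such that nor(ψ) ≥ nor(φ) − 1 and F is constant on val(ψ). -/
namespace NepPaper

/-- An `i`-creature (with `bound = F i`): a function `f` on subsets of a
nonempty set `val ⊆ {0, …, bound - 1}` which is monotonic, satisfies bigness,
vanishes on `∅` and is `≤ 1` on singletons. -/
structure Creature (bound : ℕ) where
  val : Finset ℕ
  f : Finset ℕ → ℕ
  val_nonempty : val.Nonempty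
  val_lt : ∀ x ∈ val, x < bound
  mono : ∀ b c : Finset ℕ, b ⊆ c → c ⊆ val → f b ≤ f c
  big : ∀ b c : Finset ℕ, b ⊆ val → c ⊆ val → f (b ∪ c) ≤ max (f b) (f c) + 1
  f_empty : f ∅ = 0
  f_singleton : ∀ x ∈ val, f {x} ≤ 1

/-- The norm of a creature: `nor(φ) = φ(val φ)`. -/
def Creature.nor {n : ℕ} (φ : Creature n) : ℕ := φ.f φ.val

/-- `ψ` is stronger than `φ` (i.e. `ψ ≤ φ`). -/
def Creature.Stronger {n : ℕ} (ψ φ : Creature n) : Prop :=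
  ψ.val ⊆ φ.val ∧ ∀ b : Finset ℕ, b ⊆ ψ.val → ψ.f b ≤ φ.f b

/-- `k*_i = ∏_{j < i} F j`. -/
def kstar (F : ℕ → ℕ) (i : ℕ) : ℕ := (Finset.range i).prod F

/-- The norm condition for conditions of the creature forcing `P`:
`liminf nor(p i)^(1/k*_i) = ∞`, i.e. for every `m` eventually
`nor (p i) > m ^ (k*_i)`. -/
def NormCond (F : ℕ → ℕ) (p : ∀ i : ℕ, Creature (F i)) : Prop :=
  ∀ m : ℕ, ∃ N : ℕ, ∀ i : ℕ, N ≤ i → m ^ kstar F i < (p i).nor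

/-! The bigness axiom applied to the partition of `val φ` into the two colour classes shows
that one class still carries `φ.f ≥ nor φ - 1`; restricting `φ` to that class gives `ψ`. -/

namespace Creature

variable {n : ℕ}

def restrict (φ : Creature n) (b : Finset ℕ) (hb : b ⊆ φ.val) (hne : b.Nonempty) :
    Creature n where
  val := b
  f := φ.f
  val_nonempty := hne
  val_lt x hx := φ.val_lt x (hb hx)
  mono u v huv hv := φ.mono u v huv (hv.trans hb)
  big u v hu hv := φ.big u v (hu.trans hb) (hv.trans hb)
  f_empty := φ.f_empty
  f_singleton x hx := φ.f_singleton x (hb hx)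

theorem restrict_stronger (φ : Creature n) (b : Finset ℕ) (hb : b ⊆ φ.val)
    (hne : b.Nonempty) : (φ.restrict b hb hne).Stronger φ :=
  ⟨hb, fun _ _ => le_rfl⟩

theorem nonempty_of_f_pos (φ : Creature n) {b : Finset ℕ} (hb : 0 < φ.f b) : b.Nonempty := by
  rw [Finset.nonempty_iff_ne_empty]
  rintro rfl
  simp [φ.f_empty] at hb

theorem nor_le_max_f_filter_add_one (φ : Creature n) (p : ℕ → Prop) [DecidablePred p] :
    φ.nor ≤ max (φ.f (φ.val.filter p)) (φ.f (φ.val.filter (fun x => ¬ p x))) + 1 := by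
  have h := φ.big _ _ (φ.val.filter_subset p) (φ.val.filter_subset fun x => ¬ p x)
  rwa [Finset.filter_union_filter_not_eq] at h

theorem exists_nor_sub_one_le_f_filter_eq (φ : Creature n) (F : ℕ → Bool) :
    ∃ t : Bool, φ.nor - 1 ≤ φ.f (φ.val.filter (fun x => F x = t)) := by
  have h := φ.nor_le_max_f_filter_add_one (fun x => F x = true)
  simp only [Bool.not_eq_true] at h
  rcases le_max_iff.mp (Nat.sub_le_of_le_add h) with h | h
  · exact ⟨true, h⟩
  · exact ⟨false, h⟩

end Creature

/-- Bigness lemma: If `φ` is an `i`-creature with `nor φ > 1`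
and `F` is a 2-coloring of `val φ`, then there is a creature `ψ ≤ φ` with
`nor ψ ≥ nor φ − 1` on which `F` is constant. -/
theorem creature_bigness (n : ℕ) (φ : Creature n) (hnor : 1 < φ.nor)
    (F : ℕ → Bool) :
    ∃ ψ : Creature n, ψ.Stronger φ ∧ φ.nor - 1 ≤ ψ.nor ∧
      ∀ x ∈ ψ.val, ∀ y ∈ ψ.val, F x = F y := by
  obtain ⟨t, ht⟩ := φ.exists_nor_sub_one_le_f_filter_eq F
  have hne := φ.nonempty_of_f_pos (show 0 < φ.f (φ.val.filter fun x => F x = t) by omega)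
  refine ⟨φ.restrict _ (φ.val.filter_subset _) hne, φ.restrict_stronger _ _ hne, ht, ?_⟩
  intro x hx y hy
  rw [(Finset.mem_filter.mp hx).2, (Finset.mem_filter.mp hy).2]

end NepPaper
end

section
/- (Meet of creatures) If φ₀ and φ₁ are i-creatures with val(φ₀) ∩ val(φ₁) ≠ ∅, then there exists a weakest i-creature φ₀ ∧ φ₁ stronger than both φ₀ and φ₁; that is, φ₀ ∧ φ₁ ≤ φ₀, φ₀ ∧ φ₁ ≤ φ₁, val(φ₀ ∧ φ₁) = val(φ₀) ∩ val(φ₁), and for every norm ψ on a subset of val(φ₀) ∩ val(φ₁) with ψ ≤ φ₀ and ψ ≤ φ₁ we have ψ ≤ φ₀ ∧ φ₁. -/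
namespace NepPaper

/-!
The meet `ψ` is defined by well-founded recursion on `|b|`: `ψ b` is the least of `φ₀ b`, `φ₁ b`
and `max (ψ b₀) (ψ b₁) + 1` over the splittings `b = b₀ ∪ b₁` into proper subsets. Bigness then
holds by construction, and induction along the same recursion shows that every function below
`φ₀` and `φ₁` with bigness lies below `ψ`. Monotonicity is also proved by induction: if `ψ c` is
attained at a splitting `c = c₀ ∪ c₁` and `b ⊆ c`, then `b = (b ∩ c₀) ∪ (b ∩ c₁)`, so bigness and
the induction hypothesis give `ψ b ≤ ψ c`.
-/

open Finset

section meetFun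

variable {α : Type*} [DecidableEq α]

def splits (b : Finset α) : Finset (Finset α × Finset α) :=
  (b.ssubsets ×ˢ b.ssubsets).filter fun p => p.1 ∪ p.2 = b

lemma mem_splits {b : Finset α} {p : Finset α × Finset α} :
    p ∈ splits b ↔ (p.1 ⊂ b ∧ p.2 ⊂ b) ∧ p.1 ∪ p.2 = b := by
  simp only [splits, mem_filter, mem_product, mem_ssubsets]

def meetFun (f₀ f₁ : Finset α → ℕ) (b : Finset α) : ℕ :=
  (insert (f₀ b) (insert (f₁ b) ((splits b).attach.image fun p =>
    max (meetFun f₀ f₁ p.1.1) (meetFun f₀ f₁ p.1.2) + 1))).min' (insert_nonempty _ _)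
termination_by b.card
decreasing_by
  all_goals apply card_lt_card
  · exact (mem_splits.1 p.2).1.1
  · exact (mem_splits.1 p.2).1.2

variable (f₀ f₁ : Finset α → ℕ)

lemma meetFun_le_left (b : Finset α) : meetFun f₀ f₁ b ≤ f₀ b := by
  rw [meetFun]
  exact min'_le _ _ (mem_insert_self _ _)

lemma meetFun_le_right (b : Finset α) : meetFun f₀ f₁ b ≤ f₁ b := by
  rw [meetFun]
  exact min'_le _ _ (mem_insert_of_mem (mem_insert_self _ _))

lemma meetFun_le_of_mem_splits {b : Finset α} {p : Finset α × Finset α} (hp : p ∈ splits b) :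
    meetFun f₀ f₁ b ≤ max (meetFun f₀ f₁ p.1) (meetFun f₀ f₁ p.2) + 1 := by
  rw [meetFun]
  exact min'_le _ _ (mem_insert_of_mem (mem_insert_of_mem
    (mem_image_of_mem _ (mem_attach _ ⟨p, hp⟩))))

lemma meetFun_eq_or (b : Finset α) :
    meetFun f₀ f₁ b = f₀ b ∨ meetFun f₀ f₁ b = f₁ b ∨
      ∃ p ∈ splits b, meetFun f₀ f₁ b = max (meetFun f₀ f₁ p.1) (meetFun f₀ f₁ p.2) + 1 := by
  have hmem := min'_mem (insert (f₀ b) (insert (f₁ b) ((splits b).attach.image fun p =>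
    max (meetFun f₀ f₁ p.1.1) (meetFun f₀ f₁ p.1.2) + 1))) (insert_nonempty _ _)
  rw [← meetFun] at hmem
  simp only [mem_insert, mem_image, mem_attach, true_and, Subtype.exists] at hmem
  rcases hmem with h | h | ⟨p, hp, h⟩
  exacts [Or.inl h, Or.inr (Or.inl h), Or.inr (Or.inr ⟨p, hp, h.symm⟩)]

lemma meetFun_union_le (b c : Finset α) :
    meetFun f₀ f₁ (b ∪ c) ≤ max (meetFun f₀ f₁ b) (meetFun f₀ f₁ c) + 1 := by
  by_cases hcb : c ⊆ b
  · rw [union_eq_left.2 hcb]; omega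
  by_cases hbc : b ⊆ c
  · rw [union_eq_right.2 hbc]; omega
  exact meetFun_le_of_mem_splits f₀ f₁
    (p := (b, c)) (mem_splits.2 ⟨⟨left_lt_sup.2 hcb, right_lt_sup.2 hbc⟩, rfl⟩)

variable {f₀ f₁}

lemma meetFun_mono {V₀ V₁ : Finset α}
    (h₀ : ∀ b c, b ⊆ c → c ⊆ V₀ → f₀ b ≤ f₀ c) (h₁ : ∀ b c, b ⊆ c → c ⊆ V₁ → f₁ b ≤ f₁ c) :
    ∀ b c, b ⊆ c → c ⊆ V₀ ∩ V₁ → meetFun f₀ f₁ b ≤ meetFun f₀ f₁ c := by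
  intro b c hbc hcV
  induction c using Finset.strongInduction generalizing b with
  | _ c ih =>
  rcases meetFun_eq_or f₀ f₁ c with hc | hc | ⟨p, hp, hc⟩
  · exact hc ▸ (meetFun_le_left f₀ f₁ b).trans (h₀ b c hbc (hcV.trans inter_subset_left))
  · exact hc ▸ (meetFun_le_right f₀ f₁ b).trans (h₁ b c hbc (hcV.trans inter_subset_right))
  obtain ⟨⟨hp₁, hp₂⟩, hunion⟩ := mem_splits.1 hp
  have hb : b = b ∩ p.1 ∪ b ∩ p.2 := by
    rw [← inter_union_distrib_left, hunion, inter_eq_left.2 hbc]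
  have ih₁ := ih p.1 hp₁ (b ∩ p.1) inter_subset_right (hp₁.subset.trans hcV)
  have ih₂ := ih p.2 hp₂ (b ∩ p.2) inter_subset_right (hp₂.subset.trans hcV)
  calc meetFun f₀ f₁ b
      ≤ max (meetFun f₀ f₁ (b ∩ p.1)) (meetFun f₀ f₁ (b ∩ p.2)) + 1 := by
        conv_lhs => rw [hb]
        exact meetFun_union_le f₀ f₁ _ _
    _ ≤ max (meetFun f₀ f₁ p.1) (meetFun f₀ f₁ p.2) + 1 := by gcongr
    _ = meetFun f₀ f₁ c := hc.symm

lemma le_meetFun {g : Finset α → ℕ} {W : Finset α}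
    (hg : ∀ b c, b ⊆ W → c ⊆ W → g (b ∪ c) ≤ max (g b) (g c) + 1)
    (h₀ : ∀ b ⊆ W, g b ≤ f₀ b) (h₁ : ∀ b ⊆ W, g b ≤ f₁ b) :
    ∀ b ⊆ W, g b ≤ meetFun f₀ f₁ b := by
  intro b hbW
  induction b using Finset.strongInduction with
  | _ b ih =>
  rcases meetFun_eq_or f₀ f₁ b with hb | hb | ⟨p, hp, hb⟩
  · exact hb ▸ h₀ b hbW
  · exact hb ▸ h₁ b hbW
  obtain ⟨⟨hp₁, hp₂⟩, hunion⟩ := mem_splits.1 hp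
  calc g b = g (p.1 ∪ p.2) := by rw [hunion]
    _ ≤ max (g p.1) (g p.2) + 1 := hg _ _ (hp₁.subset.trans hbW) (hp₂.subset.trans hbW)
    _ ≤ max (meetFun f₀ f₁ p.1) (meetFun f₀ f₁ p.2) + 1 := by
        gcongr
        exacts [ih _ hp₁ (hp₁.subset.trans hbW), ih _ hp₂ (hp₂.subset.trans hbW)]
    _ = meetFun f₀ f₁ b := hb.symm

end meetFun

namespace Creature

variable {n : ℕ} (φ₀ φ₁ : Creature n) (h : (φ₀.val ∩ φ₁.val).Nonempty)

def meet : Creature n where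
  val := φ₀.val ∩ φ₁.val
  f := meetFun φ₀.f φ₁.f
  val_nonempty := h
  val_lt x hx := φ₀.val_lt x (mem_of_mem_inter_left hx)
  mono := meetFun_mono φ₀.mono φ₁.mono
  big b c _ _ := meetFun_union_le φ₀.f φ₁.f b c
  f_empty := Nat.le_zero.1 (φ₀.f_empty ▸ meetFun_le_left φ₀.f φ₁.f ∅)
  f_singleton x hx :=
    (meetFun_le_left φ₀.f φ₁.f {x}).trans (φ₀.f_singleton x (mem_of_mem_inter_left hx))

lemma meet_stronger_left : (φ₀.meet φ₁ h).Stronger φ₀ :=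
  ⟨inter_subset_left, fun b _ => meetFun_le_left φ₀.f φ₁.f b⟩

lemma meet_stronger_right : (φ₀.meet φ₁ h).Stronger φ₁ :=
  ⟨inter_subset_right, fun b _ => meetFun_le_right φ₀.f φ₁.f b⟩

lemma Stronger.meet {χ : Creature n} (h₀ : χ.Stronger φ₀) (h₁ : χ.Stronger φ₁) :
    χ.Stronger (φ₀.meet φ₁ h) :=
  ⟨subset_inter h₀.1 h₁.1, le_meetFun χ.big h₀.2 h₁.2⟩

end Creature

/-- Meet of creatures: If `φ₀, φ₁` are `i`-creatures with
`val φ₀ ∩ val φ₁ ≠ ∅`, then there is a weakest creature stronger than both,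
with value set `val φ₀ ∩ val φ₁`. -/
theorem creature_meet (n : ℕ) (φ₀ φ₁ : Creature n)
    (h : (φ₀.val ∩ φ₁.val).Nonempty) :
    ∃ ψ : Creature n, ψ.Stronger φ₀ ∧ ψ.Stronger φ₁ ∧
      ψ.val = φ₀.val ∩ φ₁.val ∧
      ∀ χ : Creature n, χ.Stronger φ₀ → χ.Stronger φ₁ → χ.Stronger ψ :=
  ⟨φ₀.meet φ₁ h, φ₀.meet_stronger_left φ₁ h, φ₀.meet_stronger_right φ₁ h, rfl,
    fun _ h₀ h₁ => h₀.meet φ₀ φ₁ h h₁⟩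

end NepPaper
end

section
/- (Decomposition for the meet) Let φ₀, φ₁ be i-creatures with val(φ₀) ∩ val(φ₁) ≠ ∅ and let ψ = φ₀ ∧ φ₁ be their meet. Then for every b ⊆ val(ψ) there exist b₀, b₁ with b = b₀ ∪ b₁ and ψ(b) ≥ max(φ₀(b₀), φ₁(b₁)). -/
namespace NepPaper

/-!
The meet is the weakest creature below both `φ₀` and `φ₁`, so it dominates every common
strengthening. One such strengthening is the creature
`b ↦ min_{b₀ ⊆ b} max (φ₀ b₀) (φ₁ (b \ b₀))`: it is monotone and big because `φ₀` and `φ₁`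
are, and it lies below `φ₀` and `φ₁` via the splits `b₀ = b` and `b₀ = ∅`. Its value at `b` is
attained by some split, and that split is the required decomposition.
-/

open Finset

namespace Creature

section SplitValue

variable {n : ℕ} (φ₀ φ₁ : Creature n)

noncomputable def splitValue (b : Finset ℕ) : ℕ :=
  b.powerset.inf' ⟨b, mem_powerset_self b⟩ fun b₀ => max (φ₀.f b₀) (φ₁.f (b \ b₀))

theorem exists_splitValue_eq (b : Finset ℕ) :
    ∃ b₀ ⊆ b, splitValue φ₀ φ₁ b = max (φ₀.f b₀) (φ₁.f (b \ b₀)) := by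
  obtain ⟨b₀, hb₀, heq⟩ := exists_mem_eq_inf' ⟨b, mem_powerset_self b⟩
    fun b₀ => max (φ₀.f b₀) (φ₁.f (b \ b₀))
  exact ⟨b₀, mem_powerset.1 hb₀, heq⟩

variable {φ₀ φ₁}

theorem splitValue_le {b b₀ : Finset ℕ} (h : b₀ ⊆ b) :
    splitValue φ₀ φ₁ b ≤ max (φ₀.f b₀) (φ₁.f (b \ b₀)) :=
  inf'_le _ (mem_powerset.2 h)

theorem splitValue_le_left (b : Finset ℕ) : splitValue φ₀ φ₁ b ≤ φ₀.f b :=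
  (splitValue_le subset_rfl).trans_eq (by simp [φ₁.f_empty])

theorem splitValue_le_right (b : Finset ℕ) : splitValue φ₀ φ₁ b ≤ φ₁.f b :=
  (splitValue_le (empty_subset b)).trans_eq (by simp [φ₀.f_empty])

/-- Restrict an optimal split of `c` to `b`. -/
theorem splitValue_mono {b c : Finset ℕ} (hbc : b ⊆ c) (hc : c ⊆ φ₀.val ∩ φ₁.val) :
    splitValue φ₀ φ₁ b ≤ splitValue φ₀ φ₁ c := by
  obtain ⟨c₀, hc₀, heq⟩ := exists_splitValue_eq φ₀ φ₁ c
  have hsub : b \ (c₀ ∩ b) ⊆ c \ c₀ := by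
    rw [sdiff_inter_self_right]; exact sdiff_subset_sdiff hbc subset_rfl
  calc splitValue φ₀ φ₁ b ≤ max (φ₀.f (c₀ ∩ b)) (φ₁.f (b \ (c₀ ∩ b))) :=
        splitValue_le inter_subset_right
    _ ≤ max (φ₀.f c₀) (φ₁.f (c \ c₀)) := by
        gcongr
        · exact φ₀.mono _ _ inter_subset_left (hc₀.trans (hc.trans inter_subset_left))
        · exact φ₁.mono _ _ hsub (sdiff_subset.trans (hc.trans inter_subset_right))
    _ = splitValue φ₀ φ₁ c := heq.symm

/-- Join optimal splits of `b` and `c`, using bigness of `φ₀` and of `φ₁` on the two parts. -/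
theorem splitValue_union_le {b c : Finset ℕ} (hb : b ⊆ φ₀.val ∩ φ₁.val)
    (hc : c ⊆ φ₀.val ∩ φ₁.val) :
    splitValue φ₀ φ₁ (b ∪ c) ≤ max (splitValue φ₀ φ₁ b) (splitValue φ₀ φ₁ c) + 1 := by
  obtain ⟨b₀, hb₀, hb_eq⟩ := exists_splitValue_eq φ₀ φ₁ b
  obtain ⟨c₀, hc₀, hc_eq⟩ := exists_splitValue_eq φ₀ φ₁ c
  have hb' := subset_inter_iff.1 hb
  have hc' := subset_inter_iff.1 hc
  have hsub : (b ∪ c) \ (b₀ ∪ c₀) ⊆ (b \ b₀) ∪ (c \ c₀) := by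
    intro x; simp only [mem_sdiff, mem_union]; tauto
  have big₀ : φ₀.f (b₀ ∪ c₀) ≤ max (φ₀.f b₀) (φ₀.f c₀) + 1 :=
    φ₀.big _ _ (hb₀.trans hb'.1) (hc₀.trans hc'.1)
  have big₁ : φ₁.f ((b ∪ c) \ (b₀ ∪ c₀)) ≤ max (φ₁.f (b \ b₀)) (φ₁.f (c \ c₀)) + 1 :=
    (φ₁.mono _ _ hsub (union_subset (sdiff_subset.trans hb'.2)
      (sdiff_subset.trans hc'.2))).trans
        (φ₁.big _ _ (sdiff_subset.trans hb'.2) (sdiff_subset.trans hc'.2))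
  have split : splitValue φ₀ φ₁ (b ∪ c) ≤ max (φ₀.f (b₀ ∪ c₀)) (φ₁.f ((b ∪ c) \ (b₀ ∪ c₀))) :=
    splitValue_le (union_subset_union hb₀ hc₀)
  omega

end SplitValue

noncomputable def splitMeet {n : ℕ} (φ₀ φ₁ : Creature n) (h : (φ₀.val ∩ φ₁.val).Nonempty) :
    Creature n where
  val := φ₀.val ∩ φ₁.val
  f := splitValue φ₀ φ₁
  val_nonempty := h
  val_lt x hx := φ₀.val_lt x (mem_inter.1 hx).1
  mono _ _ := splitValue_mono
  big _ _ := splitValue_union_le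
  f_empty := by simp [splitValue, φ₀.f_empty, φ₁.f_empty]
  f_singleton x hx :=
    (splitValue_le_left {x}).trans (φ₀.f_singleton x (mem_inter.1 hx).1)

theorem splitMeet_stronger_left {n : ℕ} (φ₀ φ₁ : Creature n)
    (h : (φ₀.val ∩ φ₁.val).Nonempty) :
    (splitMeet φ₀ φ₁ h).Stronger φ₀ :=
  ⟨inter_subset_left, fun b _ => splitValue_le_left b⟩

theorem splitMeet_stronger_right {n : ℕ} (φ₀ φ₁ : Creature n)
    (h : (φ₀.val ∩ φ₁.val).Nonempty) :
    (splitMeet φ₀ φ₁ h).Stronger φ₁ :=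
  ⟨inter_subset_right, fun b _ => splitValue_le_right b⟩

end Creature

theorem creature_meet_decomposition_general (n : ℕ) (φ₀ φ₁ : Creature n)
    (h : (φ₀.val ∩ φ₁.val).Nonempty)
    (ψ : Creature n)
    (hval : ψ.val = φ₀.val ∩ φ₁.val)
    (hweakest : ∀ χ : Creature n, χ.Stronger φ₀ → χ.Stronger φ₁ → χ.Stronger ψ) :
    ∀ b : Finset ℕ, b ⊆ ψ.val →
      ∃ b₀ b₁ : Finset ℕ, b = b₀ ∪ b₁ ∧ max (φ₀.f b₀) (φ₁.f b₁) ≤ ψ.f b := by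
  intro b hb
  have hle : (Creature.splitMeet φ₀ φ₁ h).Stronger ψ :=
    hweakest _ (Creature.splitMeet_stronger_left φ₀ φ₁ h)
      (Creature.splitMeet_stronger_right φ₀ φ₁ h)
  obtain ⟨b₀, hb₀, heq⟩ := Creature.exists_splitValue_eq φ₀ φ₁ b
  refine ⟨b₀, b \ b₀, (union_sdiff_of_subset hb₀).symm, ?_⟩
  rw [← heq]
  exact hle.2 b (hval ▸ hb : b ⊆ φ₀.val ∩ φ₁.val)

/-- Decomposition for the meet: If `ψ = φ₀ ∧ φ₁` is the meet
(the weakest common strengthening, with `val ψ = val φ₀ ∩ val φ₁`), then every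
`b ⊆ val ψ` decomposes as `b = b₀ ∪ b₁` with
`ψ(b) ≥ max (φ₀(b₀)) (φ₁(b₁))`. -/
theorem creature_meet_decomposition (n : ℕ) (φ₀ φ₁ : Creature n)
    (h : (φ₀.val ∩ φ₁.val).Nonempty)
    (ψ : Creature n) (hψ₀ : ψ.Stronger φ₀) (hψ₁ : ψ.Stronger φ₁)
    (hval : ψ.val = φ₀.val ∩ φ₁.val)
    (hweakest : ∀ χ : Creature n, χ.Stronger φ₀ → χ.Stronger φ₁ → χ.Stronger ψ) :
    ∀ b : Finset ℕ, b ⊆ ψ.val →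
      ∃ b₀ b₁ : Finset ℕ, b = b₀ ∪ b₁ ∧ max (φ₀.f b₀) (φ₁.f b₁) ≤ ψ.f b :=
  creature_meet_decomposition_general n φ₀ φ₁ h ψ hval hweakest

end NepPaper
end

section
/- There exists a condition in the creature forcing P: specifically, the sequence p with val(p(n)) = F(n) and p(n)(b) = ⌊log₂(|b|)⌋ for nonempty b (and p(n)(∅) = 0) is a valid condition, i.e., each p(n) is an n-creature and liminf_{n→∞} nor(p(n))^{1/k*_n} = ∞, provided F(i) > 2^{i^{k*_i}} where k*_i = ∏_{j<i} F(j). -/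
namespace NepPaper

/-!
`b ↦ ⌊log₂ |b|⌋` is a creature because `|b ∪ c| ≤ 2 max(|b|, |c|)` costs at most one in the
logarithm. Its norm on `F i` is `⌊log₂ F i⌋ ≥ i ^ k*_i`, and for `i > m` this beats `m ^ k*_i`
since `k*_i ≥ 1`.
-/

theorem _root_.Nat.log_add_le_max_add_one (b x y : ℕ) :
    Nat.log b (x + y) ≤ max (Nat.log b x) (Nat.log b y) + 1 := by
  rcases le_or_gt b 1 with hb | hb
  · simp [Nat.log_of_left_le_one hb]
  rcases Nat.eq_zero_or_pos (max x y) with hmax | hmax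
  · obtain ⟨rfl, rfl⟩ : x = 0 ∧ y = 0 := by omega
    simp
  calc Nat.log b (x + y) ≤ Nat.log b (max x y * b) := 
          Nat.log_mono_right ((by omega : x + y ≤ max x y * 2).trans (Nat.mul_le_mul_left _ hb))
    _ = max (Nat.log b x) (Nat.log b y) + 1 := by
          rw [Nat.log_mul_base hb hmax.ne', Nat.log_monotone.map_max]

theorem log_card_union_le (b : ℕ) (s t : Finset ℕ) :
    Nat.log b (s ∪ t).card ≤ max (Nat.log b s.card) (Nat.log b t.card) + 1 :=
  (Nat.log_mono_right (Finset.card_union_le s t)).trans (Nat.log_add_le_max_add_one b _ _)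

def Creature.logCard (base n : ℕ) (hn : 0 < n) : Creature n where
  val := Finset.range n
  f s := Nat.log base s.card
  val_nonempty := Finset.nonempty_range_iff.2 hn.ne'
  val_lt _ := Finset.mem_range.1
  mono _ _ hst _ := Nat.log_mono_right (Finset.card_le_card hst)
  big s t _ _ := log_card_union_le base s t
  f_empty := by simp
  f_singleton _ _ := by simp

theorem Creature.nor_logCard (base n : ℕ) (hn : 0 < n) :
    (Creature.logCard base n hn).nor = Nat.log base n :=
  congrArg (Nat.log base) (Finset.card_range n)

theorem kstar_ne_zero {F : ℕ → ℕ} (hF : ∀ i, F i ≠ 0) (i : ℕ) : kstar F i ≠ 0 :=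
  Finset.prod_ne_zero_iff.2 fun j _ => hF j

theorem normCond_of_pow_kstar_le {F : ℕ → ℕ} {p : ∀ i, Creature (F i)}
    (hk : ∀ i, kstar F i ≠ 0) (hnor : ∀ i, i ^ kstar F i ≤ (p i).nor) : NormCond F p :=
  fun m => ⟨m + 1, fun i hi => (Nat.pow_lt_pow_left (by omega) (hk i)).trans_le (hnor i)⟩

/-- The creature forcing `P` is nonempty: the sequence `p` with
`val (p n) = F n` and `p n (b) = ⌊log₂ |b|⌋` is a valid condition, provided
`F i > 2 ^ (i ^ k*_i)`. -/
theorem exists_condition (F : ℕ → ℕ)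
    (hF : ∀ i : ℕ, 2 ^ (i ^ kstar F i) < F i) :
    ∃ p : ∀ i : ℕ, Creature (F i),
      (∀ n : ℕ, (p n).val = Finset.range (F n)) ∧
      (∀ n : ℕ, ∀ b : Finset ℕ, (p n).f b = Nat.log 2 b.card) ∧
      NormCond F p := by
  have hFpos (i : ℕ) : 0 < F i := Nat.zero_lt_of_lt (hF i)
  refine ⟨fun i => Creature.logCard 2 (F i) (hFpos i), fun _ => rfl, fun _ _ => rfl, ?_⟩
  refine normCond_of_pow_kstar_le (kstar_ne_zero fun i => (hFpos i).ne') fun i => ?_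
  rw [Creature.nor_logCard]
  exact Nat.le_log_of_pow_le one_lt_two (hF i).le

end NepPaper
end
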